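/- Let G = Q₈ and let s, t ∈ {σ, τ, στ} with s ≠ t. The subgroup A_{s,t} = ⟨λ(s), ρ(t)⟩ of Perm(G) is a regular subgroup of Perm(G) normalized by λ(G). -/
import Mathlib


abbrev G : Type := QuaternionGroup 2
def σ : G := QuaternionGroup.a 1
def τ : G := QuaternionGroup.xa 0
def lam (g : G) : Equiv.Perm G := Equiv.mulLeft g
def rho (g : G) : Equiv.Perm G := Equiv.mulRight g⁻¹
def Est (s t : G) : Subgroup (Equiv.Perm G) :=
  Subgroup.closure {lam s * rho t, lam (s^2), lam t * rho (s*t)}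
def Ast (s t : G) : Subgroup (Equiv.Perm G) :=
  Subgroup.closure {lam s, rho t}
def eta (s t : G) : Equiv.Perm G :=
  List.formPerm [1, s, t, (s*t)⁻¹, s^2, s⁻¹, t⁻¹, s*t]
def Cst (s t : G) : Subgroup (Equiv.Perm G) :=
  Subgroup.closure {eta s t}
def Dsl (s t : G) : Subgroup (Equiv.Perm G) :=
  Subgroup.closure {lam s, lam t * rho s}
def Dsr (s t : G) : Subgroup (Equiv.Perm G) :=
  Subgroup.closure {rho s, lam s * rho t}
def lamG : Subgroup (Equiv.Perm G) := Subgroup.closure (Set.range lam)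
def rhoG : Subgroup (Equiv.Perm G) := Subgroup.closure (Set.range rho)
/-- `f` is `G`-equivariant for the conjugation action of `G` via `lam`. -/
def Equivariant {N₁ N₂ : Subgroup (Equiv.Perm G)} (f : N₁ ≃* N₂) : Prop :=
  ∀ (g : G) (η : Equiv.Perm G) (hη : η ∈ N₁) (hη' : lam g * η * (lam g)⁻¹ ∈ N₁),
    (f ⟨lam g * η * (lam g)⁻¹, hη'⟩ : Equiv.Perm G)
      = lam g * (f ⟨η, hη⟩ : Equiv.Perm G) * (lam g)⁻¹

/- auxiliary lemmas -/

lemma lam_mul (a b : G) : lam (a * b) = lam a * lam b := by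
  ext x; simp [lam, mul_assoc]

lemma lam_one' : lam (1 : G) = 1 := by
  ext x; simp [lam]

lemma rho_mul (a b : G) : rho (a * b) = rho a * rho b := by
  ext x; simp [rho, mul_assoc]

lemma rho_one' : rho (1 : G) = 1 := by
  ext x; simp [rho]

lemma lam_pow (a : G) (n : ℕ) : lam (a ^ n) = lam a ^ n := by
  induction n with
  | zero => simpa using lam_one'
  | succ n ih => rw [pow_succ, lam_mul, ih, pow_succ]

lemma rho_pow (a : G) (n : ℕ) : rho (a ^ n) = rho a ^ n := by
  induction n with
  | zero => simpa using rho_one'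
  | succ n ih => rw [pow_succ, rho_mul, ih, pow_succ]

lemma lam_inv (g : G) : (lam g)⁻¹ = lam g⁻¹ :=
  inv_eq_of_mul_eq_one_right (by rw [← lam_mul, mul_inv_cancel, lam_one'])

lemma lam_rho_comm (a b : G) : Commute (lam a) (rho b) := by
  show lam a * rho b = rho b * lam a
  ext x; simp [lam, rho, mul_assoc]

lemma apply_lam_rho (a b x : G) : (lam a * rho b) x = a * (x * b⁻¹) := rfl

/-- the decidable facts needed about s and t -/
abbrev Facts (s t : G) : Prop :=
  s ^ 4 = 1 ∧ t ^ 2 = s ^ 2 ∧ (∀ x : G, s ^ 2 * x = x * s ^ 2) ∧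
  (∀ i < 4, ∀ j < 2, ∀ k < 4, ∀ l < 2,
      s ^ i * (t ^ j)⁻¹ = s ^ k * (t ^ l)⁻¹ → i = k ∧ j = l) ∧
  (∀ x y : G, ∃ i < 4, ∃ j < 2, s ^ i * (x * (t ^ j)⁻¹) = y) ∧
  (∀ i < 4, ∀ j < 2, ∀ x : G, s ^ i * (x * (t ^ j)⁻¹) = x → i = 0 ∧ j = 0) ∧
  (∀ g : G, ∀ i < 4, ∃ k < 4, g * s ^ i * g⁻¹ = s ^ k)

section Aux

variable {s t : G}

lemma sq_inv (hs4 : s ^ 4 = 1) : (s ^ 2)⁻¹ = s ^ 2 :=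
  inv_eq_of_mul_eq_one_right (by rw [← pow_add]; exact hs4)

lemma rho_t_sq (hs4 : s ^ 4 = 1) (hts : t ^ 2 = s ^ 2) (hc : ∀ x : G, s ^ 2 * x = x * s ^ 2) : rho t ^ 2 = lam s ^ 2 := by
  rw [← rho_pow, ← lam_pow, hts]
  ext x
  simp only [lam, rho, Equiv.coe_mulLeft, Equiv.coe_mulRight]
  rw [sq_inv hs4, ← hc]

lemma lam_s_four (hs4 : s ^ 4 = 1) : lam s ^ 4 = 1 := by rw [← lam_pow, hs4, lam_one']

lemma key_form (hs4 : s ^ 4 = 1) (hts : t ^ 2 = s ^ 2) (hc : ∀ x : G, s ^ 2 * x = x * s ^ 2) (m n : ℕ) :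
    ∃ i < 4, ∃ j < 2, lam s ^ m * rho t ^ n = lam s ^ i * rho t ^ j := by
  have h1 : rho t ^ n = lam s ^ (2 * (n / 2)) * rho t ^ (n % 2) := by
    conv_lhs => rw [show n = 2 * (n / 2) + n % 2 from (Nat.div_add_mod n 2).symm]
    rw [pow_add, pow_mul, rho_t_sq hs4 hts hc, ← pow_mul]
  have h2 : ∀ M : ℕ, lam s ^ M = lam s ^ (M % 4) := by
    intro M
    conv_lhs => rw [show M = 4 * (M / 4) + M % 4 from (Nat.div_add_mod M 4).symm]
    rw [pow_add, pow_mul, lam_s_four hs4, one_pow, one_mul]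
  refine ⟨(m + 2 * (n / 2)) % 4, Nat.mod_lt _ (by norm_num), n % 2,
    Nat.mod_lt _ (by norm_num), ?_⟩
  rw [h1, ← mul_assoc, ← pow_add, ← h2]

lemma mem_Ast (i j : ℕ) : lam s ^ i * rho t ^ j ∈ Ast s t :=
  mul_mem (pow_mem (Subgroup.subset_closure (by simp)) i)
    (pow_mem (Subgroup.subset_closure (by simp)) j)

lemma mem_Ast_iff (hs4 : s ^ 4 = 1) (hts : t ^ 2 = s ^ 2) (hc : ∀ x : G, s ^ 2 * x = x * s ^ 2) {η : Equiv.Perm G} (h : η ∈ Ast s t) :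
    ∃ i < 4, ∃ j < 2, η = lam s ^ i * rho t ^ j := by
  have hcom : ∀ a b : ℕ, Commute (lam s ^ a) (rho t ^ b) := fun a b =>
    (lam_rho_comm s t).pow_pow a b
  let K : Subgroup (Equiv.Perm G) :=
    { carrier := {η | ∃ i < 4, ∃ j < 2, η = lam s ^ i * rho t ^ j}
      one_mem' := ⟨0, by norm_num, 0, by norm_num, by simp⟩
      mul_mem' := by
        rintro a b ⟨i, hi, j, hj, rfl⟩ ⟨k, hk, l, hl, rfl⟩
        have e1 : lam s ^ i * rho t ^ j * (lam s ^ k * rho t ^ l)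
            = lam s ^ (i + k) * rho t ^ (j + l) := by
          have e : lam s ^ i * rho t ^ j * (lam s ^ k * rho t ^ l)
              = lam s ^ i * (rho t ^ j * lam s ^ k) * rho t ^ l := by group
          rw [e, ← (hcom k j).eq]
          rw [show lam s ^ i * (lam s ^ k * rho t ^ j) * rho t ^ l
              = (lam s ^ i * lam s ^ k) * (rho t ^ j * rho t ^ l) by group,
            ← pow_add, ← pow_add]
        rw [e1]
        exact key_form hs4 hts hc _ _
      inv_mem' := by
        rintro a ⟨i, hi, j, hj, rfl⟩
        have h8 : (lam s ^ i * rho t ^ j) ^ 8 = 1 := by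
          rw [(hcom i j).mul_pow, ← pow_mul, ← pow_mul, ← lam_pow, ← rho_pow]
          have hs8 : s ^ (i * 8) = 1 := by
            rw [show i * 8 = 4 * (2 * i) by ring, pow_mul, hs4, one_pow]
          have ht4 : t ^ 4 = 1 := by
            rw [show (4 : ℕ) = 2 * 2 from rfl, pow_mul, hts, ← pow_mul]; exact hs4
          have ht8 : t ^ (j * 8) = 1 := by
            rw [show j * 8 = 4 * (2 * j) by ring, pow_mul, ht4, one_pow]
          rw [hs8, ht8, lam_one', rho_one', one_mul]
        have hinv : (lam s ^ i * rho t ^ j)⁻¹ = (lam s ^ i * rho t ^ j) ^ 7 :=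
          inv_eq_of_mul_eq_one_right (by rw [← pow_succ']; exact h8)
        rw [hinv, (hcom i j).mul_pow, ← pow_mul, ← pow_mul]
        exact key_form hs4 hts hc _ _ }
  have hK : Ast s t ≤ K := by
    rw [Ast, Subgroup.closure_le]
    rintro x hx
    simp only [Set.mem_insert_iff, Set.mem_singleton_iff] at hx
    rcases hx with rfl | rfl
    · exact ⟨1, by norm_num, 0, by norm_num, by simp⟩
    · exact ⟨0, by norm_num, 1, by norm_num, by simp⟩
  exact hK h

end Aux

lemma main_aux (s t : G) (h : Facts s t) :
    Nat.card ↥(Ast s t) = 8 ∧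
      (∀ x y : G, ∃ η ∈ Ast s t, η x = y) ∧
      (∀ η ∈ Ast s t, ∀ x : G, η x = x → η = 1) ∧
      (∀ g : G, ∀ η ∈ Ast s t, lam g * η * (lam g)⁻¹ ∈ Ast s t) := by
  obtain ⟨hs4, hts, hc, F1, F2, F3, F4⟩ := h
  have happ : ∀ (i j : ℕ) (x : G),
      (lam s ^ i * rho t ^ j) x = s ^ i * (x * (t ^ j)⁻¹) := by
    intro i j x
    rw [← lam_pow, ← rho_pow, apply_lam_rho]
  refine ⟨?_, ?_, ?_, ?_⟩
  · -- cardinality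
    let f : Fin 4 × Fin 2 → ↥(Ast s t) := fun p =>
      ⟨lam s ^ (p.1 : ℕ) * rho t ^ (p.2 : ℕ), mem_Ast _ _⟩
    have hinj : Function.Injective f := by
      rintro ⟨i, j⟩ ⟨k, l⟩ hf
      have h' : lam s ^ (i : ℕ) * rho t ^ (j : ℕ) = lam s ^ (k : ℕ) * rho t ^ (l : ℕ) :=
        congrArg Subtype.val hf
      have h1 := DFunLike.congr_fun h' 1
      rw [happ, happ, one_mul, one_mul] at h1
      obtain ⟨hik, hjl⟩ := F1 _ i.isLt _ j.isLt _ k.isLt _ l.isLt h1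
      exact Prod.ext (Fin.ext hik) (Fin.ext hjl)
    have hsurj : Function.Surjective f := by
      rintro ⟨η, hη⟩
      obtain ⟨i, hi, j, hj, rfl⟩ := mem_Ast_iff hs4 hts hc hη
      exact ⟨(⟨i, hi⟩, ⟨j, hj⟩), rfl⟩
    have := Nat.card_eq_of_bijective f ⟨hinj, hsurj⟩
    rw [← this]
    simp [Nat.card_eq_fintype_card]
  · -- transitivity
    intro x y
    obtain ⟨i, hi, j, hj, hxy⟩ := F2 x y
    exact ⟨lam s ^ i * rho t ^ j, mem_Ast _ _, by rw [happ]; exact hxy⟩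
  · -- freeness
    intro η hη x hx
    obtain ⟨i, hi, j, hj, rfl⟩ := mem_Ast_iff hs4 hts hc hη
    rw [happ] at hx
    obtain ⟨hi0, hj0⟩ := F3 _ hi _ hj _ hx
    subst hi0; subst hj0
    simp
  · -- normalized by lam G
    intro g η hη
    obtain ⟨i, hi, j, hj, rfl⟩ := mem_Ast_iff hs4 hts hc hη
    obtain ⟨k, hk, hgk⟩ := F4 g i hi
    have hc2 : Commute (lam g⁻¹) (rho t ^ j) := (lam_rho_comm g⁻¹ t).pow_right j
    have e : lam g * (lam s ^ i * rho t ^ j) * (lam g)⁻¹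
        = lam s ^ k * rho t ^ j := by
      rw [lam_inv, ← lam_pow]
      calc lam g * (lam (s ^ i) * rho t ^ j) * lam g⁻¹
          = lam g * lam (s ^ i) * (rho t ^ j * lam g⁻¹) := by group
        _ = lam g * lam (s ^ i) * (lam g⁻¹ * rho t ^ j) := by rw [← hc2.eq]
        _ = (lam g * lam (s ^ i) * lam g⁻¹) * rho t ^ j := by group
        _ = lam (g * s ^ i * g⁻¹) * rho t ^ j := by rw [lam_mul, lam_mul]
        _ = lam (s ^ k) * rho t ^ j := by rw [hgk]
        _ = lam s ^ k * rho t ^ j := by rw [lam_pow]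
    rw [e]
    exact mem_Ast _ _

set_option synthInstance.maxSize 4000 in
set_option synthInstance.maxHeartbeats 1000000 in
set_option maxHeartbeats 2000000 in
theorem stmt5 (s t : G) (hs : s ∈ ({σ, τ, σ * τ} : Set G)) (ht : t ∈ ({σ, τ, σ * τ} : Set G))
    (hst : s ≠ t) :
    Nat.card ↥(Ast s t) = 8 ∧
      (∀ x y : G, ∃ η ∈ Ast s t, η x = y) ∧
      (∀ η ∈ Ast s t, ∀ x : G, η x = x → η = 1) ∧
      (∀ g : G, ∀ η ∈ Ast s t, lam g * η * (lam g)⁻¹ ∈ Ast s t) := by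
  simp only [Set.mem_insert_iff, Set.mem_singleton_iff] at hs ht
  rcases hs with rfl | rfl | rfl <;> rcases ht with rfl | rfl | rfl <;>
    first
      | exact absurd rfl hst
      | exact main_aux _ _ (by decide)
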